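/- Let U and W be Banach spaces, E, A : U → W bounded linear operators, W₁ := closure(ran E), U₁ := {u ∈ U : A u ∈ closure(ran E)}, and assume the system (E, A) is normal, i.e., (N1): closure(ran E) + A(ker E) = closure(ran E + A(ker E)) and (N2): closure(closure(ran E) ∩ A(ker E)) = closure(ran E) ∩ closure(A(ker E)) hold. Let J_U : U₁ ⧸ (ker E ∩ U₁) → U ⧸ ker E and J_W : W₁ ⧸ closure(A(ker E ∩ U₁)) → W ⧸ closure(A(ker E)) be the continuous linear maps induced by the inclusions U₁ ⊆ U and W₁ ⊆ W. Then J_U is a Banach-space isomorphism (continuous bijection with continuous inverse) onto the closed subspace U' := {u + ker E : A u ∈ closure(ran E + A(ker E))} of U ⧸ ker E, J_W is a Banach-space isomorphism onto the closed subspace W' := closure of the image of ran E in W ⧸ closure(A(ker E)), and for every u ∈ U₁ one has J_W(E u + closure(A(ker E ∩ U₁))) = E u + closure(A(ker E)) and J_W(A u + closure(A(ker E ∩ U₁))) = A u + closure(A(ker E)); consequently the doubly reduced systems (E_cred1_ored1, A_cred1_ored1) and (E_ored1_cred1, A_ored1_cred1) are equivalent via (J_U, J_W). -/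

import Mathlib

/-! Both `J_U` and `J_W` are induced by inclusions `p ⊆ V` on quotients `p ⧸ L → V ⧸ K`, so their
ranges are the images of `p`, which are closed once `K + p` is closed; being injective with closed
range between Banach spaces, they are closed embeddings by the open mapping theorem.
(N1) says that `closure(ran E) + A(ker E)` is closed. Its preimage under `A` is `ker E + U₁`, which
gives the closedness and the description of the range of `J_U`, and it equals
`closure(A(ker E)) + W₁`, which gives the closed range of `J_W`. Injectivity of `J_W` is (N2), since
`A(ker E ∩ U₁) = A(ker E) ∩ W₁`. -/

namespace Submodule

section Algebraic

variable {R M M₂ : Type*} [Ring R] [AddCommGroup M] [Module R M] [AddCommGroup M₂] [Module R M₂]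

theorem comap_sup_map_eq (f : M →ₗ[R] M₂) (q : Submodule R M₂) (p : Submodule R M) :
    comap f (q ⊔ map f p) = comap f q ⊔ p := by
  refine le_antisymm (fun x hx => ?_)
    (sup_le (comap_mono le_sup_left) (map_le_iff_le_comap.mp le_sup_right))
  obtain ⟨y, hy, _, ⟨z, hz, rfl⟩, hyz⟩ := mem_sup.mp (mem_comap.mp hx)
  have hxz : x - z ∈ comap f q := by simpa [← hyz] using hy
  simpa using add_mem (mem_sup_left hxz) (mem_sup_right hz : z ∈ comap f q ⊔ p)

theorem map_mkQ_comap_sup_map (f : M →ₗ[R] M₂) (q : Submodule R M₂) (K : Submodule R M) :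
    map K.mkQ (comap f (q ⊔ map f K)) = map K.mkQ (comap f q) := by
  rw [comap_sup_map_eq, map_sup, mkQ_map_self, sup_bot_eq]

variable {K p : Submodule R M} {L : Submodule R p} (f : (p ⧸ L) →ₗ[R] M ⧸ K)
  (hf : ∀ u : p, f (Quotient.mk u) = Quotient.mk (u : M))
include hf

theorem range_eq_map_mkQ_of_apply_mk : LinearMap.range f = map K.mkQ p := by
  ext x
  constructor
  · rintro ⟨q, rfl⟩
    obtain ⟨u, rfl⟩ := Quotient.mk_surjective _ q
    exact ⟨u, u.2, (hf u).symm⟩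
  · rintro ⟨u, hu, rfl⟩
    exact ⟨Quotient.mk ⟨u, hu⟩, hf _⟩

theorem injective_of_apply_mk (hL : comap p.subtype K ≤ L) : Function.Injective f := by
  intro x y hxy
  obtain ⟨u, rfl⟩ := Quotient.mk_surjective _ x
  obtain ⟨v, rfl⟩ := Quotient.mk_surjective _ y
  rw [hf, hf, Quotient.eq] at hxy
  exact (Quotient.eq _).mpr (hL hxy)

end Algebraic

section Topological

variable {R M M₂ : Type*} [Ring R] [AddCommGroup M] [Module R M] [TopologicalSpace M]
  [AddCommGroup M₂] [Module R M₂] [TopologicalSpace M₂]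

theorem isClosed_map_mkQ [ContinuousAdd M] {K S : Submodule R M}
    (h : IsClosed ((S ⊔ K : Submodule R M) : Set M)) : IsClosed (map K.mkQ S : Set (M ⧸ K)) := by
  rwa [← (isOpenQuotientMap_mkQ K).isQuotientMap.isClosed_preimage, ← comap_coe, comap_map_mkQ,
    sup_comm]

theorem isClosed_comap_sup {f : M →ₗ[R] M₂} (hf : Continuous f) {q : Submodule R M₂}
    {p : Submodule R M} (h : IsClosed ((q ⊔ map f p : Submodule R M₂) : Set M₂)) :
    IsClosed ((comap f q ⊔ p : Submodule R M) : Set M) := by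
  rw [← comap_sup_map_eq]
  exact h.preimage hf

theorem isClosed_sup_topologicalClosure [ContinuousAdd M] [ContinuousConstSMul R M]
    {S T : Submodule R M} (h : IsClosed ((S ⊔ T : Submodule R M) : Set M)) :
    IsClosed ((S ⊔ T.topologicalClosure : Submodule R M) : Set M) := by
  have heq : S ⊔ T.topologicalClosure = S ⊔ T :=
    le_antisymm (sup_le le_sup_left (topologicalClosure_minimal _ le_sup_right h))
      (sup_le_sup_left (le_topologicalClosure T) S)
  rwa [heq]

theorem map_topologicalClosure_eq_of_isClosed [ContinuousAdd M] [ContinuousConstSMul R M]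
    [ContinuousAdd M₂] [ContinuousConstSMul R M₂] {f : M →ₗ[R] M₂} (hf : Continuous f)
    {S : Submodule R M} (h : IsClosed (map f S.topologicalClosure : Set M₂)) :
    map f S.topologicalClosure = (map f S).topologicalClosure := by
  refine le_antisymm ?_ (topologicalClosure_minimal _ (map_mono (le_topologicalClosure S)) h)
  rintro _ ⟨x, hx, rfl⟩
  rw [← SetLike.mem_coe, topologicalClosure_coe, map_coe]
  exact image_closure_subset_closure_image hf (Set.mem_image_of_mem f (by simpa using hx))

end Topological

theorem comap_subtype_topologicalClosure_map_le {R M M₂ : Type*} [Ring R] [AddCommGroup M]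
    [Module R M] [AddCommGroup M₂] [Module R M₂] [TopologicalSpace M₂] [ContinuousAdd M₂]
    [ContinuousConstSMul R M₂] {f : M →ₗ[R] M₂}
    {C : Submodule R M₂} {K : Submodule R M}
    (h : (C ⊓ map f K).topologicalClosure = C ⊓ (map f K).topologicalClosure) :
    comap C.subtype (map f K).topologicalClosure ≤
      comap C.subtype (map f (K ⊓ comap f C)).topologicalClosure := by
  intro w hw
  have hw' := mem_inf.mpr ⟨w.2, (mem_comap.mp hw : (w : M₂) ∈ _)⟩
  rwa [← h, inf_comm, map_inf_eq_map_inf_comap] at hw'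

end Submodule

theorem ContinuousLinearMap.isClosedEmbedding_of_injective_of_isClosed_range
    {𝕜 E F : Type*} [NontriviallyNormedField 𝕜] [NormedAddCommGroup E] [NormedSpace 𝕜 E]
    [CompleteSpace E] [NormedAddCommGroup F] [NormedSpace 𝕜 F] [CompleteSpace F] (f : E →L[𝕜] F)
    (hinj : Function.Injective f) (hclo : IsClosed (Set.range f)) : Topology.IsClosedEmbedding f :=
  (f.antilipschitz_of_injective_of_isClosed_range hinj hclo).choose_spec.isClosedEmbedding
    f.uniformContinuous

theorem Submodule.isClosedEmbedding_of_apply_mk {𝕜 V : Type*} [NontriviallyNormedField 𝕜]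
    [NormedAddCommGroup V] [NormedSpace 𝕜 V] [CompleteSpace V]
    {K p : Submodule 𝕜 V} {L : Submodule 𝕜 p} (hK : IsClosed (K : Set V))
    (hp : IsClosed (p : Set V)) (hL : IsClosed (L : Set p)) (f : (p ⧸ L) →L[𝕜] V ⧸ K)
    (hf : ∀ u : p, f (Quotient.mk u) = Quotient.mk (u : V)) (hLK : comap p.subtype K ≤ L)
    (hpK : IsClosed ((p ⊔ K : Submodule 𝕜 V) : Set V)) : Topology.IsClosedEmbedding f := by
  refine f.isClosedEmbedding_of_injective_of_isClosed_range
    (injective_of_apply_mk f.toLinearMap hf hLK) ?_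
  have h := isClosed_map_mkQ hpK
  rwa [← range_eq_map_mkQ_of_apply_mk f.toLinearMap hf, LinearMap.coe_range,
    ContinuousLinearMap.coe_coe] at h

/-- **Commutativity theorem.** Assume the system `(E, A)` is normal
((N1) and (N2)).  Then the induced maps `J_U : U₁ ⧸ (ker E ∩ U₁) → U ⧸ ker E` and
`J_W : W₁ ⧸ closure(A(ker E ∩ U₁)) → W ⧸ closure(A(ker E))` are Banach-space
isomorphisms onto the closed subspaces
`U' = {u + ker E : A u ∈ closure(ran E + A(ker E))}` and
`W' = closure(image of ran E in W ⧸ closure(A(ker E)))` respectively, and they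
intertwine the doubly reduced operators: for `u ∈ U₁`,
`J_W(E u + closure(A(ker E ∩ U₁))) = E u + closure(A(ker E))` and likewise for `A`.
Hence the systems `(E_cred1_ored1, A_cred1_ored1)` and `(E_ored1_cred1, A_ored1_cred1)`
are equivalent via `(J_U, J_W)`. -/
theorem commutativity_of_reductions
    {U W : Type*} [NormedAddCommGroup U] [NormedSpace ℝ U] [CompleteSpace U]
    [NormedAddCommGroup W] [NormedSpace ℝ W] [CompleteSpace W]
    (E A : U →L[ℝ] W)
    -- (N1)
    (hN1 : (LinearMap.range (E : U →ₗ[ℝ] W)).topologicalClosure ⊔ Submodule.map (A : U →ₗ[ℝ] W) (LinearMap.ker (E : U →ₗ[ℝ] W))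
        = (LinearMap.range (E : U →ₗ[ℝ] W) ⊔ Submodule.map (A : U →ₗ[ℝ] W) (LinearMap.ker (E : U →ₗ[ℝ] W))).topologicalClosure)
    -- (N2)
    (hN2 : ((LinearMap.range (E : U →ₗ[ℝ] W)).topologicalClosure ⊓
          Submodule.map (A : U →ₗ[ℝ] W) (LinearMap.ker (E : U →ₗ[ℝ] W))).topologicalClosure
        = (LinearMap.range (E : U →ₗ[ℝ] W)).topologicalClosure ⊓
          (Submodule.map (A : U →ₗ[ℝ] W) (LinearMap.ker (E : U →ₗ[ℝ] W))).topologicalClosure)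
    -- J_U : U₁ ⧸ (ker E ∩ U₁) → U ⧸ ker E, induced by the inclusion U₁ ⊆ U
    (JU : (↥(Submodule.comap (A : U →ₗ[ℝ] W) (LinearMap.range (E : U →ₗ[ℝ] W)).topologicalClosure) ⧸
            Submodule.comap
              (Submodule.comap (A : U →ₗ[ℝ] W) (LinearMap.range (E : U →ₗ[ℝ] W)).topologicalClosure).subtype
              (LinearMap.ker (E : U →ₗ[ℝ] W)))
          →L[ℝ] (U ⧸ LinearMap.ker (E : U →ₗ[ℝ] W)))
    (hJU : ∀ u : ↥(Submodule.comap (A : U →ₗ[ℝ] W) (LinearMap.range (E : U →ₗ[ℝ] W)).topologicalClosure),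
        JU (Submodule.Quotient.mk u) = Submodule.Quotient.mk (u : U))
    -- J_W : W₁ ⧸ closure(A(ker E ∩ U₁)) → W ⧸ closure(A(ker E)), induced by W₁ ⊆ W
    (JW : (↥((LinearMap.range (E : U →ₗ[ℝ] W)).topologicalClosure) ⧸
            Submodule.comap ((LinearMap.range (E : U →ₗ[ℝ] W)).topologicalClosure).subtype
              ((Submodule.map (A : U →ₗ[ℝ] W) (LinearMap.ker (E : U →ₗ[ℝ] W) ⊓
                Submodule.comap (A : U →ₗ[ℝ] W) (LinearMap.range (E : U →ₗ[ℝ] W)).topologicalClosure)).topologicalClosure))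
          →L[ℝ] (W ⧸ (Submodule.map (A : U →ₗ[ℝ] W) (LinearMap.ker (E : U →ₗ[ℝ] W))).topologicalClosure))
    (hJW : ∀ w : ↥((LinearMap.range (E : U →ₗ[ℝ] W)).topologicalClosure),
        JW (Submodule.Quotient.mk w) = Submodule.Quotient.mk (w : W)) :
    -- U' is closed and J_U is an isomorphism onto U'
    IsClosed ((Submodule.map (LinearMap.ker (E : U →ₗ[ℝ] W)).mkQ
        (Submodule.comap (A : U →ₗ[ℝ] W)
          (LinearMap.range (E : U →ₗ[ℝ] W) ⊔ Submodule.map (A : U →ₗ[ℝ] W) (LinearMap.ker (E : U →ₗ[ℝ] W))).topologicalClosure)) :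
        Set (U ⧸ LinearMap.ker (E : U →ₗ[ℝ] W)))
    ∧ Topology.IsClosedEmbedding ⇑JU
    ∧ LinearMap.range JU.toLinearMap =
        Submodule.map (LinearMap.ker (E : U →ₗ[ℝ] W)).mkQ
          (Submodule.comap (A : U →ₗ[ℝ] W)
            (LinearMap.range (E : U →ₗ[ℝ] W) ⊔ Submodule.map (A : U →ₗ[ℝ] W) (LinearMap.ker (E : U →ₗ[ℝ] W))).topologicalClosure)
    -- J_W is an isomorphism onto the closed subspace W'
    ∧ Topology.IsClosedEmbedding ⇑JW
    ∧ LinearMap.range JW.toLinearMap =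
        (Submodule.map ((Submodule.map (A : U →ₗ[ℝ] W) (LinearMap.ker (E : U →ₗ[ℝ] W))).topologicalClosure).mkQ
          (LinearMap.range (E : U →ₗ[ℝ] W))).topologicalClosure
    -- intertwining of the doubly reduced operators via (J_U, J_W)
    ∧ (∀ (u : U),
        u ∈ Submodule.comap (A : U →ₗ[ℝ] W) (LinearMap.range (E : U →ₗ[ℝ] W)).topologicalClosure →
        ∀ (hEu : E u ∈ (LinearMap.range (E : U →ₗ[ℝ] W)).topologicalClosure)
          (hAu : A u ∈ (LinearMap.range (E : U →ₗ[ℝ] W)).topologicalClosure),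
        JW (Submodule.Quotient.mk ⟨E u, hEu⟩) = Submodule.Quotient.mk (E u)
        ∧ JW (Submodule.Quotient.mk ⟨A u, hAu⟩) = Submodule.Quotient.mk (A u)) := by
  have hW₁ := Submodule.isClosed_topologicalClosure (LinearMap.range (E : U →ₗ[ℝ] W))
  have hW₁M := hN1 ▸ Submodule.isClosed_topologicalClosure (LinearMap.range (E : U →ₗ[ℝ] W) ⊔
    Submodule.map (A : U →ₗ[ℝ] W) (LinearMap.ker (E : U →ₗ[ℝ] W)))
  have hU₁K := Submodule.isClosed_comap_sup A.continuous hW₁M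
  have hW₁N := Submodule.isClosed_sup_topologicalClosure hW₁M
  refine ⟨?_, ?_, ?_, ?_, ?_, fun u _ hEu hAu => ⟨hJW ⟨E u, hEu⟩, hJW ⟨A u, hAu⟩⟩⟩
  · rw [← hN1, Submodule.map_mkQ_comap_sup_map]
    exact Submodule.isClosed_map_mkQ hU₁K
  · exact Submodule.isClosedEmbedding_of_apply_mk E.isClosed_ker (hW₁.preimage A.continuous)
      (E.isClosed_ker.preimage continuous_subtype_val) JU hJU le_rfl hU₁K
  · rw [← hN1, Submodule.map_mkQ_comap_sup_map]
    exact Submodule.range_eq_map_mkQ_of_apply_mk JU.toLinearMap hJU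
  · exact Submodule.isClosedEmbedding_of_apply_mk (Submodule.isClosed_topologicalClosure _) hW₁
      ((Submodule.isClosed_topologicalClosure _).preimage continuous_subtype_val) JW hJW
      (Submodule.comap_subtype_topologicalClosure_map_le hN2) hW₁N
  · rw [Submodule.range_eq_map_mkQ_of_apply_mk JW.toLinearMap hJW]
    exact Submodule.map_topologicalClosure_eq_of_isClosed
      (Submodule.isOpenQuotientMap_mkQ _).continuous (Submodule.isClosed_map_mkQ hW₁N)
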